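/- arXiv:1703.04427 — 3 statements merged into one kernel-verified Lean document; each statement's English description precedes it below -/
import Mathlib

section
/- Let r ∈ {0,1}. If a vector (x_α, ..., x_1) is r-realizable, then every augmentation of it is r-realizable; that is, if (y_α, ..., y_1) satisfies x_i ≤ y_i for all 1 ≤ i ≤ α, then (y_α, ..., y_1) is also r-realizable. -/
namespace CopsRobbers

variable {V : Type*}

/-- The closed neighborhood of `v` within the vertex set `S` (graphs are reflexive,
so `v` itself belongs to its closed neighborhood). -/
def closedNbhd (G : SimpleGraph V) (S : Set V) (v : V) : Set V :=
  {u | u ∈ S ∧ (u = v ∨ G.Adj u v)}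

/-- `v` is a strict corner of the subgraph induced on `S`: some other vertex `w ∈ S`
strictly corners `v`, i.e. `N[v] ⊊ N[w]` within `S`. -/
def StrictCorner (G : SimpleGraph V) (S : Set V) (v : V) : Prop :=
  v ∈ S ∧ ∃ w ∈ S, w ≠ v ∧ closedNbhd G S v ⊂ closedNbhd G S w

/-- The remaining vertex sets of the corner ranking procedure (0-indexed auxiliary
version): at each step all current strict corners are removed. -/
def stageAux (G : SimpleGraph V) : ℕ → Set V
  | 0 => Set.univ
  | n + 1 => stageAux G n \ {v | StrictCorner G (stageAux G n) v}

/-- `stage G k` is the vertex set of `G^(k)` (for `k ≥ 1`), so `stage G 1 = V(G)`. -/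
def stage (G : SimpleGraph V) (k : ℕ) : Set V := stageAux G (k - 1)

/-- The corner rank of a vertex: the least `k ≥ 1` such that `v` is a strict corner
of `G^(k)`, or `G^(k)` is a clique still containing `v`; and `⊤` (that is, `∞`) if
there is no such `k`. -/
noncomputable def cornerRank (G : SimpleGraph V) (v : V) : ℕ∞ :=
  sInf {k : ℕ∞ | ∃ n : ℕ, k = (n : ℕ∞) ∧ 1 ≤ n ∧
    (StrictCorner G (stage G n) v ∨ (G.IsClique (stage G n) ∧ v ∈ stage G n))}

/-- The corner rank of a graph: the largest corner rank of a vertex. -/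
noncomputable def graphRank (G : SimpleGraph V) : ℕ∞ := ⨆ v, cornerRank G v

/-- A graph is cop-win iff every vertex has finite corner rank. -/
def CopWin (G : SimpleGraph V) : Prop := ∀ v, cornerRank G v ≠ ⊤

/-- `v` dominates the set `S`: `v` is (reflexively) adjacent to every vertex of `S`. -/
def Dominates (G : SimpleGraph V) (v : V) (S : Set V) : Prop :=
  ∀ u ∈ S, u = v ∨ G.Adj v u

/-- A cop-win graph of corner rank `α ≥ 2` is `tp1` if some vertex of corner rank `α`
dominates the vertex set of `G^(α-1)`. -/
def Tp1 (G : SimpleGraph V) : Prop :=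
  ∃ α : ℕ, 2 ≤ α ∧ graphRank G = (α : ℕ∞) ∧
    ∃ v, cornerRank G v = (α : ℕ∞) ∧ Dominates G v (stage G (α - 1))

/-- `G` realizes the vector `(x_α, …, x_1)` (written as the list `[x_α, …, x_1]`):
`G` is cop-win of corner rank `α` and for each `k`, `x_k` is the number of vertices
of corner rank `k`. -/
def Realizes (G : SimpleGraph V) (x : List ℕ) : Prop :=
  CopWin G ∧ graphRank G = (x.length : ℕ∞) ∧
  ∀ i : Fin x.length,
    x.get i = {v | cornerRank G v = ((x.length - (i : ℕ) : ℕ) : ℕ∞)}.ncard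

/-- `G` r-realizes `x` (for `r ∈ {0,1}`): `G` realizes `x` and `G` is tp-r. -/
def RRealizes (G : SimpleGraph V) (r : ℕ) (x : List ℕ) : Prop :=
  Realizes G x ∧ (Tp1 G ↔ r = 1)

/-- A vector is realizable if it is the rank cardinality vector of some finite cop-win graph. -/
def Realizable (x : List ℕ) : Prop :=
  ∃ (W : Type) (_ : Fintype W) (G : SimpleGraph W), Realizes G x

/-- A vector is r-realizable if some finite tp-r cop-win graph realizes it. -/
def RRealizable (r : ℕ) (x : List ℕ) : Prop :=
  ∃ (W : Type) (_ : Fintype W) (G : SimpleGraph W), RRealizes G r x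

open Classical in
/-- The capture time of a cop-win graph: `cr(G) - r(G)`. -/
noncomputable def captureTime (G : SimpleGraph V) : ℕ :=
  (graphRank G).toNat - (if Tp1 G then 1 else 0)

end CopsRobbers

/-!
Replacing every vertex by a nonempty clique of true twins turns each closed neighbourhood into
the preimage of the original one, so the whole corner ranking, the cop-win property and the tp
type pull back along the projection, and each vertex of rank `k` contributes its fibre to `X_k`.
Every rank `1, …, α` is attained, so giving one vertex of rank `k` exactly `y_k - x_k` twins
realizes `(y_α, …, y_1)`.
-/

namespace CopsRobbers

variable {V W : Type*}

section CornerRank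

variable {G : SimpleGraph V} {v : V} {n : ℕ}

lemma stageAux_antitone (G : SimpleGraph V) : Antitone (stageAux G) :=
  antitone_nat_of_succ_le fun _ => Set.sdiff_subset

lemma stageAux_eq_of_le (h : ∀ v, ¬ StrictCorner G (stageAux G n) v) {m : ℕ} (hnm : n ≤ m) :
    stageAux G m = stageAux G n := by
  induction m, hnm using Nat.le_induction with
  | base => rfl
  | succ m _ ih => simp [stageAux, ih, h]

lemma not_strictCorner_of_isClique {S : Set V} (hS : G.IsClique S) (v : V) :
    ¬ StrictCorner G S v := by
  rintro ⟨hv, w, hw, -, hsub⟩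
  have hfull : ∀ u ∈ S, closedNbhd G S u = S := fun u hu =>
    Set.sep_eq_self_iff_mem_true.2 fun z hz => (eq_or_ne z u).imp_right (hS hz hu)
  rw [hfull v hv, hfull w hw] at hsub
  exact hsub.ne rfl

lemma cornerRank_le (hn : 1 ≤ n)
    (h : StrictCorner G (stage G n) v ∨ (G.IsClique (stage G n) ∧ v ∈ stage G n)) :
    cornerRank G v ≤ n :=
  sInf_le ⟨n, rfl, hn, h⟩

lemma cornerRank_le_of_strictCorner (h : StrictCorner G (stageAux G n) v) :
    cornerRank G v ≤ (n + 1 : ℕ) :=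
  cornerRank_le n.succ_pos (Or.inl h)

lemma cornerRank_le_of_isClique (hS : G.IsClique (stageAux G n)) (hv : v ∈ stageAux G n) :
    cornerRank G v ≤ (n + 1 : ℕ) :=
  cornerRank_le n.succ_pos (Or.inr ⟨hS, hv⟩)

lemma le_cornerRank (hv : v ∈ stageAux G n) (hS : ¬ G.IsClique (stageAux G n)) :
    ((n + 1 : ℕ) : ℕ∞) ≤ cornerRank G v := by
  refine le_sInf ?_
  rintro _ ⟨m, rfl, hm, hrank | ⟨hclique, -⟩⟩ <;> norm_cast <;> by_contra! hmn
  · have hmem : v ∈ stageAux G (m - 1 + 1) := stageAux_antitone G (by omega) hv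
    exact hmem.2 hrank
  · have hstall :=
      stageAux_eq_of_le (not_strictCorner_of_isClique hclique) (by omega : m - 1 ≤ n)
    exact hS (hstall ▸ hclique)

lemma cornerRank_eq_of_strictCorner (h : StrictCorner G (stageAux G n) v) :
    cornerRank G v = (n + 1 : ℕ) :=
  (cornerRank_le_of_strictCorner h).antisymm
    (le_cornerRank h.1 fun hS => not_strictCorner_of_isClique hS v h)

lemma mem_stageAux_of_lt_cornerRank (h : (n : ℕ∞) < cornerRank G v) : v ∈ stageAux G n := by
  induction n with
  | zero => trivial
  | succ n ih =>
    refine ⟨ih (lt_of_le_of_lt (by norm_cast; omega) h), fun hcorner => ?_⟩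
    exact (cornerRank_le_of_strictCorner hcorner).not_gt h

lemma strictCorner_or_isClique_of_cornerRank_eq (h : cornerRank G v = n) :
    StrictCorner G (stage G n) v ∨ (G.IsClique (stage G n) ∧ v ∈ stage G n) := by
  have hne : {k : ℕ∞ | ∃ n : ℕ, k = n ∧ 1 ≤ n ∧ (StrictCorner G (stage G n) v ∨
      (G.IsClique (stage G n) ∧ v ∈ stage G n))}.Nonempty :=
    Set.nonempty_iff_ne_empty.2 fun hempty => by simp [cornerRank, hempty] at h
  obtain ⟨k, hk, -, hrank⟩ := csInf_mem hne
  rwa [← Nat.cast_inj.1 (hk.symm.trans h)]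

/-- Every corner rank up to the rank of the graph is attained: below a vertex of maximal rank
`α`, each `G^(k)` with `k < α` is not a clique and must contain a strict corner, since otherwise
the procedure would stall before assigning that vertex a rank. -/
lemma exists_cornerRank_eq [Finite V] {α k : ℕ} (hα : graphRank G = α) (hk : 1 ≤ k)
    (hkα : k ≤ α) : ∃ v, cornerRank G v = k := by
  have : Nonempty V := by
    by_contra! hV
    simp [graphRank, eq_comm] at hα
    omega
  obtain ⟨v, hv⟩ : ∃ v, cornerRank G v = α := hα ▸ exists_eq_ciSup_of_finite
  obtain rfl | hlt := hkα.eq_or_lt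
  · exact ⟨v, hv⟩
  obtain ⟨j, rfl⟩ : ∃ j, k = j + 1 := ⟨k - 1, by omega⟩
  have hvj : v ∈ stageAux G j := mem_stageAux_of_lt_cornerRank (by rw [hv]; norm_cast)
  have hS : ¬ G.IsClique (stageAux G j) := fun hS => by
    have := hv ▸ cornerRank_le_of_isClique hS hvj
    norm_cast at this
    omega
  by_cases hcorner : ∃ w, StrictCorner G (stageAux G j) w
  · obtain ⟨w, hw⟩ := hcorner
    exact ⟨w, cornerRank_eq_of_strictCorner hw⟩
  push Not at hcorner
  have hstall : stage G α = stageAux G j := stageAux_eq_of_le hcorner (by omega)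
  rcases strictCorner_or_isClique_of_cornerRank_eq hv with hrank | ⟨hclique, -⟩
  · exact (hcorner v (hstall ▸ hrank)).elim
  · exact (hS (hstall ▸ hclique)).elim

end CornerRank

lemma isClique_iff_forall_dominates {G : SimpleGraph V} {S : Set V} :
    G.IsClique S ↔ ∀ v ∈ S, Dominates G v S := by
  simp only [SimpleGraph.IsClique, Set.Pairwise, Dominates, or_iff_not_imp_left]
  exact ⟨fun h v hv u hu huv => h hv hu (Ne.symm huv),
    fun h u hu w hw huw => h u hu w hw huw.symm⟩

structure IsTwinBlowup (H : SimpleGraph W) (G : SimpleGraph V) (f : W → V) : Prop where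
  surjective : Function.Surjective f
  eq_or_adj_iff (a b : W) : a = b ∨ H.Adj a b ↔ f a = f b ∨ G.Adj (f a) (f b)

namespace IsTwinBlowup

variable {H : SimpleGraph W} {G : SimpleGraph V} {f : W → V}

lemma closedNbhd_preimage (hf : IsTwinBlowup H G f) (S : Set V) (a : W) :
    closedNbhd H (f ⁻¹' S) a = f ⁻¹' closedNbhd G S (f a) :=
  Set.ext fun b => and_congr_right fun _ => hf.eq_or_adj_iff b a

lemma strictCorner_preimage_iff (hf : IsTwinBlowup H G f) (S : Set V) (a : W) :
    StrictCorner H (f ⁻¹' S) a ↔ StrictCorner G S (f a) := by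
  simp only [StrictCorner, hf.closedNbhd_preimage, ssubset_iff_subset_not_subset,
    hf.surjective.preimage_subset_preimage_iff, Set.mem_preimage]
  refine and_congr_right fun _ => ⟨?_, ?_⟩
  · rintro ⟨b, hb, -, hsub⟩
    exact ⟨f b, hb, fun hba => hsub.2 (by rw [hba]), hsub⟩
  · rintro ⟨w, hw, hne, hsub⟩
    obtain ⟨b, rfl⟩ := hf.surjective w
    exact ⟨b, hw, fun hba => hne (congrArg f hba), hsub⟩

lemma stageAux_eq_preimage (hf : IsTwinBlowup H G f) (n : ℕ) :
    stageAux H n = f ⁻¹' stageAux G n := by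
  induction n with
  | zero => rfl
  | succ n ih =>
    ext a
    simp [stageAux, ih, hf.strictCorner_preimage_iff]

lemma stage_eq_preimage (hf : IsTwinBlowup H G f) (n : ℕ) :
    stage H n = f ⁻¹' stage G n :=
  hf.stageAux_eq_preimage (n - 1)

lemma dominates_preimage_iff (hf : IsTwinBlowup H G f) (S : Set V) (a : W) :
    Dominates H a (f ⁻¹' S) ↔ Dominates G (f a) S := by
  simp only [Dominates, eq_comm (b := a), eq_comm (b := f a), hf.surjective.forall,
    Set.mem_preimage, hf.eq_or_adj_iff]

lemma isClique_preimage_iff (hf : IsTwinBlowup H G f) (S : Set V) :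
    H.IsClique (f ⁻¹' S) ↔ G.IsClique S := by
  simp only [isClique_iff_forall_dominates, hf.surjective.forall, Set.mem_preimage,
    hf.dominates_preimage_iff]

lemma cornerRank_eq (hf : IsTwinBlowup H G f) (a : W) :
    cornerRank H a = cornerRank G (f a) := by
  simp only [cornerRank, hf.stage_eq_preimage, hf.strictCorner_preimage_iff,
    hf.isClique_preimage_iff, Set.mem_preimage]

lemma graphRank_eq (hf : IsTwinBlowup H G f) : graphRank H = graphRank G := by
  simp only [graphRank, hf.cornerRank_eq]
  exact hf.surjective.iSup_comp (cornerRank G)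

lemma copWin_iff (hf : IsTwinBlowup H G f) : CopWin H ↔ CopWin G := by
  simp only [CopWin, hf.cornerRank_eq, hf.surjective.forall]

lemma tp1_iff (hf : IsTwinBlowup H G f) : Tp1 H ↔ Tp1 G := by
  simp only [Tp1, hf.graphRank_eq, hf.cornerRank_eq, hf.stage_eq_preimage,
    hf.dominates_preimage_iff, hf.surjective.exists]

end IsTwinBlowup

/-- Each vertex `v` of `G` is replaced by a clique of `m v + 1` true twins. -/
def blowup (G : SimpleGraph V) (m : V → ℕ) : SimpleGraph (Σ v, Fin (m v + 1)) where
  Adj a b := a ≠ b ∧ (a.1 = b.1 ∨ G.Adj a.1 b.1)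
  symm := ⟨fun _ _ h => ⟨h.1.symm, h.2.imp Eq.symm SimpleGraph.Adj.symm⟩⟩
  loopless := ⟨fun _ h => h.1 rfl⟩

lemma isTwinBlowup_blowup (G : SimpleGraph V) (m : V → ℕ) :
    IsTwinBlowup (blowup G m) G Sigma.fst where
  surjective v := ⟨⟨v, 0⟩, rfl⟩
  eq_or_adj_iff a b := by
    by_cases hab : a = b
    · simp [hab]
    · simp [blowup, hab]

lemma ncard_blowup_preimage (m : V → ℕ) (T : Finset V) :
    (Sigma.fst ⁻¹' (T : Set V) : Set (Σ v, Fin (m v + 1))).ncard =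
      T.card + ∑ v ∈ T, m v := by
  have : (Sigma.fst ⁻¹' (T : Set V) : Set (Σ v, Fin (m v + 1))) =
      (T.sigma fun _ => Finset.univ : Finset (Σ v, Fin (m v + 1))) := by
    ext; simp
  rw [this, Set.ncard_coe_finset, Finset.card_sigma]
  simp [Finset.sum_add_distrib, add_comm]

lemma realizes_blowup [Fintype W] {G : SimpleGraph W} {x y : List ℕ} (hG : Realizes G x)
    (hlen : x.length = y.length) (m : W → ℕ)
    (hm : ∀ i : Fin x.length,
      x.get i + ∑ v with cornerRank G v = (x.length - i : ℕ), m v = y.get (i.cast hlen)) :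
    Realizes (blowup G m) y := by
  have hf := isTwinBlowup_blowup G m
  refine ⟨hf.copWin_iff.2 hG.1, by rw [hf.graphRank_eq, hG.2.1, hlen], fun i' => ?_⟩
  obtain ⟨i, rfl⟩ : ∃ i : Fin x.length, i.cast hlen = i' := ⟨i'.cast hlen.symm, rfl⟩
  let X : Finset W := {v | cornerRank G v = (x.length - i : ℕ)}
  have hX : {a | cornerRank (blowup G m) a = (y.length - i : ℕ)} =
      Sigma.fst ⁻¹' (X : Set W) := by
    ext; simp [X, hf.cornerRank_eq, hlen]
  have hcard : X.card = x.get i := by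
    rw [hG.2.2, ← Set.ncard_coe_finset, Finset.coe_filter]
    simp
  rw [Fin.val_cast, hX, ncard_blowup_preimage, hcard, ← hm]

end CopsRobbers

theorem CopsRobbers.augmentation_rRealizable_general
    (r : ℕ) (x y : List ℕ) (hlen : x.length = y.length)
    (hle : ∀ i : Fin x.length, x.get i ≤ y.get (Fin.cast hlen i))
    (hx : CopsRobbers.RRealizable r x) :
    CopsRobbers.RRealizable r y := by
  obtain ⟨W, _, G, hG, htp⟩ := hx
  choose rep hrep using fun i : Fin x.length =>
    exists_cornerRank_eq (G := G) hG.2.1 (k := x.length - i) (by omega) (by omega)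
  have index_eq {i j : Fin x.length} (h : cornerRank G (rep j) = (x.length - i : ℕ)) :
      j = i := by
    rw [hrep j] at h
    norm_cast at h
    omega
  have hrep_inj : rep.Injective := fun i j hij => index_eq (by rw [hij]; exact hrep j)
  let d i := y.get (i.cast hlen) - x.get i
  refine ⟨_, inferInstance, blowup G (Function.extend rep d 0),
    realizes_blowup hG hlen _ fun i => ?_, (isTwinBlowup_blowup G _).tp1_iff.trans htp⟩
  have hrep_mem : rep i ∈ ({v | cornerRank G v = (x.length - i : ℕ)} : Finset W) :=
    Finset.mem_filter.2 ⟨Finset.mem_univ _, hrep i⟩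
  rw [Finset.sum_eq_single_of_mem (rep i) hrep_mem, hrep_inj.extend_apply]
  · exact Nat.add_sub_cancel' (hle i)
  · rintro v hv hne
    refine Function.extend_apply' _ _ _ ?_
    rintro ⟨j, rfl⟩
    exact hne (congrArg rep (index_eq (Finset.mem_filter.1 hv).2))

/-- If a vector is r-realizable (r ∈ {0,1}), then so is any augmentation of it. -/
theorem CopsRobbers.augmentation_rRealizable
    (r : ℕ) (hr : r ≤ 1) (x y : List ℕ) (hlen : x.length = y.length)
    (hle : ∀ i : Fin x.length, x.get i ≤ y.get (Fin.cast hlen i))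
    (hx : CopsRobbers.RRealizable r x) :
    CopsRobbers.RRealizable r y :=
  CopsRobbers.augmentation_rRealizable_general r x y hlen hle hx
end

section
/- (Path Contraction) Let G be a cop-win graph and let v and w be two vertices of G both of corner rank k. If the shortest path from v to w in the graph G^(k) has length m, then there is no path from v to w in G of length less than m; that is, the distance between v and w in G is at least their distance in G^(k). -/
/-!
Each stage `G^(k+1)` is a retract of `G^(k)`: fold every strict corner onto a vertex whose
closed neighbourhood is maximal among those containing its own, and which is therefore no
strict corner itself. Composing these folds retracts `G` onto `G^(k)` by a map that sends
adjacent vertices to equal or adjacent ones, so it maps every walk of `G` between vertices of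
`G^(k)` onto a walk of `G^(k)` between the same vertices that is at most as long.
-/

namespace CopsRobbers

variable {V : Type*}

structure IsRetraction (G : SimpleGraph V) (T S : Set V) (f : V → V) : Prop where
  mapsTo : Set.MapsTo f T S
  fixed : ∀ u ∈ S, f u = u
  map_adj : ∀ ⦃u u'⦄, u ∈ T → u' ∈ T → G.Adj u u' → f u = f u' ∨ G.Adj (f u) (f u')

theorem IsRetraction.comp {G : SimpleGraph V} {T S R : Set V} {f g : V → V}
    (hg : IsRetraction G S R g) (hf : IsRetraction G T S f) (hRS : R ⊆ S) :
    IsRetraction G T R (g ∘ f) where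
  mapsTo := hg.mapsTo.comp hf.mapsTo
  fixed u hu := by simp only [Function.comp_apply, hf.fixed u (hRS hu), hg.fixed u hu]
  map_adj u u' hu hu' huu' := by
    rcases hf.map_adj hu hu' huu' with heq | hadj
    · exact Or.inl (congrArg g heq)
    · exact hg.map_adj (hf.mapsTo hu) (hf.mapsTo hu') hadj

theorem mem_closedNbhd_comm (G : SimpleGraph V) {S : Set V} {u u' : V} (hu : u ∈ S)
    (hu' : u' ∈ S) : u' ∈ closedNbhd G S u ↔ u ∈ closedNbhd G S u' := by
  simp only [closedNbhd, Set.mem_ofPred_eq, hu, hu', true_and, eq_comm (a := u'), G.adj_comm u']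

theorem IsRetraction.exists_walk_induce_length_le {G : SimpleGraph V} {S : Set V} {f : V → V}
    (hf : IsRetraction G Set.univ S f) {a b : V} (p : G.Walk a b) :
    ∃ q : (G.induce S).Walk ⟨f a, hf.mapsTo trivial⟩ ⟨f b, hf.mapsTo trivial⟩,
      q.length ≤ p.length := by
  induction p with
  | nil => exact ⟨.nil, le_rfl⟩
  | cons hadj p ih =>
    obtain ⟨q, hq⟩ := ih
    rcases hf.map_adj trivial trivial hadj with heq | hadj'
    · exact ⟨q.copy (Subtype.ext heq).symm rfl, by simpa using hq.trans p.length.le_succ⟩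
    · exact ⟨.cons (SimpleGraph.induce_adj.2 hadj') q, by simpa using hq⟩

theorem IsRetraction.dist_induce_le_length {G : SimpleGraph V} {S : Set V} {f : V → V}
    (hf : IsRetraction G Set.univ S f) {a b : V} (ha : a ∈ S) (hb : b ∈ S) (p : G.Walk a b) :
    (G.induce S).dist ⟨a, ha⟩ ⟨b, hb⟩ ≤ p.length := by
  obtain ⟨q, hq⟩ := hf.exists_walk_induce_length_le p
  calc (G.induce S).dist ⟨a, ha⟩ ⟨b, hb⟩
      ≤ (q.copy (Subtype.ext (hf.fixed a ha)) (Subtype.ext (hf.fixed b hb))).length :=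
        SimpleGraph.dist_le _
    _ ≤ p.length := by rwa [SimpleGraph.Walk.length_copy]

variable [Finite V]

theorem StrictCorner.exists_closedNbhd_subset_not_strictCorner {G : SimpleGraph V} {S : Set V}
    {v : V} (hv : StrictCorner G S v) :
    ∃ w ∈ S, ¬ StrictCorner G S w ∧ closedNbhd G S v ⊆ closedNbhd G S w := by
  obtain ⟨w, ⟨hwS, hvw⟩, hmax⟩ := Set.Finite.exists_maximalFor (closedNbhd G S)
    {w | w ∈ S ∧ closedNbhd G S v ⊆ closedNbhd G S w} (Set.toFinite _) ⟨v, hv.1, subset_rfl⟩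
  refine ⟨w, hwS, ?_, hvw⟩
  rintro ⟨-, w', hw'S, -, hww'⟩
  exact hww'.2 (hmax ⟨hw'S, hvw.trans hww'.subset⟩ hww'.subset)

open Classical in
noncomputable def fold (G : SimpleGraph V) (S : Set V) (v : V) : V :=
  if hv : StrictCorner G S v then hv.exists_closedNbhd_subset_not_strictCorner.choose else v

theorem closedNbhd_subset_fold (G : SimpleGraph V) (S : Set V) (v : V) :
    closedNbhd G S v ⊆ closedNbhd G S (fold G S v) := by
  unfold fold
  split_ifs with hv
  · exact hv.exists_closedNbhd_subset_not_strictCorner.choose_spec.2.2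
  · exact subset_rfl

theorem fold_mem (G : SimpleGraph V) {S : Set V} {v : V} (hv : v ∈ S) :
    fold G S v ∈ S \ {v | StrictCorner G S v} := by
  unfold fold
  split_ifs with hcorner
  · exact hcorner.exists_closedNbhd_subset_not_strictCorner.choose_spec.imp_right And.left
  · exact ⟨hv, hcorner⟩

theorem isRetraction_fold (G : SimpleGraph V) (S : Set V) :
    IsRetraction G S (S \ {v | StrictCorner G S v}) (fold G S) where
  mapsTo _ := fold_mem G
  fixed _ hv := dif_neg hv.2
  map_adj u u' hu hu' huu' := by
    have hfu : fold G S u ∈ S := (fold_mem G hu).1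
    have hu'_fu : u' ∈ closedNbhd G S (fold G S u) :=
      closedNbhd_subset_fold G S u ⟨hu', Or.inr huu'.symm⟩
    have hfu_fu' : fold G S u ∈ closedNbhd G S (fold G S u') :=
      closedNbhd_subset_fold G S u' ((mem_closedNbhd_comm G hfu hu').1 hu'_fu)
    exact hfu_fu'.2

theorem exists_isRetraction_stageAux (G : SimpleGraph V) (n : ℕ) :
    ∃ f, IsRetraction G Set.univ (stageAux G n) f := by
  induction n with
  | zero => exact ⟨id, fun _ _ => trivial, fun _ _ => rfl, fun _ _ _ _ h => Or.inr h⟩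
  | succ n ih =>
    obtain ⟨f, hf⟩ := ih
    exact ⟨_, (isRetraction_fold G _).comp hf Set.sdiff_subset⟩

end CopsRobbers

theorem CopsRobbers.path_contraction_general
    {V : Type} [Fintype V] (G : SimpleGraph V)
    (v w : V) (k : ℕ)
    (hvS : v ∈ CopsRobbers.stage G k) (hwS : w ∈ CopsRobbers.stage G k)
    (m : ℕ)
    (hm : (SimpleGraph.induce (CopsRobbers.stage G k) G).dist ⟨v, hvS⟩ ⟨w, hwS⟩ = m) :
    ∀ p : G.Walk v w, m ≤ p.length := by
  intro p
  obtain ⟨f, hf⟩ := CopsRobbers.exists_isRetraction_stageAux G (k - 1)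
  exact hm ▸ hf.dist_induce_le_length hvS hwS p

/-- Path Contraction: if `v` and `w` both have corner rank `k` and their
distance in `G^(k)` is `m`, then every walk from `v` to `w` in `G` has length at least `m`. -/
theorem CopsRobbers.path_contraction
    {V : Type} [Fintype V] (G : SimpleGraph V) (hG : CopsRobbers.CopWin G)
    (v w : V) (k : ℕ)
    (hv : CopsRobbers.cornerRank G v = (k : ℕ∞))
    (hw : CopsRobbers.cornerRank G w = (k : ℕ∞))
    (hvS : v ∈ CopsRobbers.stage G k) (hwS : w ∈ CopsRobbers.stage G k)
    (m : ℕ)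
    (hreach : (SimpleGraph.induce (CopsRobbers.stage G k) G).Reachable ⟨v, hvS⟩ ⟨w, hwS⟩)
    (hm : (SimpleGraph.induce (CopsRobbers.stage G k) G).dist ⟨v, hvS⟩ ⟨w, hwS⟩ = m) :
    ∀ p : G.Walk v w, m ≤ p.length :=
  CopsRobbers.path_contraction_general G v w k hvS hwS m hm
end

section
/- No vector (x_α, ..., x_1) of length α ≥ 2 with x_{α−1} = 1 is realizable, and no vector (x_α, ..., x_1) of length α ≥ 3 with x_{α−2} = 1 is realizable. -/
set_option linter.unusedSectionVars false
set_option linter.dupNamespace false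
namespace CopsRobbers
variable {V : Type*} {G : SimpleGraph V}
-- === my development ===

variable {G : SimpleGraph V}

def Q (G : SimpleGraph V) (n : ℕ) (v : V) : Prop :=
  StrictCorner G (stage G n) v ∨ (G.IsClique (stage G n) ∧ v ∈ stage G n)

lemma stage_succ {n : ℕ} (h : 1 ≤ n) :
    stage G (n+1) = stage G n \ {v | StrictCorner G (stage G n) v} := by
  obtain ⟨m, rfl⟩ := Nat.exists_eq_succ_of_ne_zero (by omega : n ≠ 0)
  rfl

lemma stageAux_anti : ∀ {m n : ℕ}, m ≤ n → stageAux G n ⊆ stageAux G m := by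
  intro m n h
  induction n with
  | zero => simp_all
  | succ k ih =>
    rcases Nat.eq_or_lt_of_le h with rfl | h'
    · exact le_refl _
    · exact (Set.diff_subset).trans (ih (by omega))

lemma stage_anti {m n : ℕ} (h : m ≤ n) : stage G n ⊆ stage G m :=
  stageAux_anti (by omega)

lemma mem_stageAux_iff {v : V} :
    ∀ {n : ℕ}, v ∈ stageAux G n ↔ ∀ m < n, ¬ StrictCorner G (stageAux G m) v := by
  intro n
  induction n with
  | zero => simp [stageAux]
  | succ k ih =>
    constructor
    · rintro ⟨h1, h2⟩ m hm
      rcases Nat.lt_succ_iff_lt_or_eq.mp hm with h | rfl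
      · exact ih.mp h1 m h
      · exact h2
    · intro h
      exact ⟨ih.mpr (fun m hm => h m (by omega)), h k (by omega)⟩

lemma cornerRank_eq_iff {n : ℕ} {v : V} :
    cornerRank G v = (n : ℕ∞) ↔
      (1 ≤ n ∧ Q G n v ∧ ∀ m, 1 ≤ m → m < n → ¬ Q G m v) := by
  constructor
  · intro h
    have hne : ({k : ℕ∞ | ∃ n : ℕ, k = (n : ℕ∞) ∧ 1 ≤ n ∧ Q G n v}).Nonempty := by
      by_contra h'
      rw [Set.not_nonempty_iff_eq_empty] at h'
      rw [cornerRank] at h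
      simp only [Q] at h'
      rw [h', sInf_empty] at h
      exact (by simp : ((⊤:ℕ∞) ≠ (n : ℕ∞))) h
    have hmem := csInf_mem hne
    have hch : cornerRank G v = sInf {k : ℕ∞ | ∃ n : ℕ, k = (n : ℕ∞) ∧ 1 ≤ n ∧ Q G n v} := rfl
    rw [← hch, h] at hmem
    obtain ⟨m, hm, hm1, hQ⟩ := hmem
    have : n = m := by exact_mod_cast hm
    subst this
    refine ⟨hm1, hQ, ?_⟩
    intro m hm1' hmn hQm
    have hle : cornerRank G v ≤ (m : ℕ∞) := sInf_le ⟨m, rfl, hm1', hQm⟩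
    rw [h] at hle
    exact absurd (by exact_mod_cast hle : n ≤ m) (by omega)
  · rintro ⟨h1, hQ, hmin⟩
    refine le_antisymm (sInf_le ⟨n, rfl, h1, hQ⟩) (le_sInf ?_)
    rintro k ⟨m, rfl, hm1, hQm⟩
    have : ¬ m < n := fun hlt => hmin m hm1 hlt hQm
    exact_mod_cast (by omega : n ≤ m)

lemma mem_stage_of_rank {v : V} {n k : ℕ} (hr : cornerRank G v = (n : ℕ∞))
    (hk1 : 1 ≤ k) (hkn : k ≤ n) : v ∈ stage G k := by
  obtain ⟨h1, hQ, hmin⟩ := cornerRank_eq_iff.mp hr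
  show v ∈ stageAux G (k - 1)
  rw [mem_stageAux_iff]
  intro m hm
  have : ¬ Q G (m+1) v := hmin (m+1) (by omega) (by omega)
  intro hc
  exact this (Or.inl hc)

section GraphLevel

variable [Finite V] {α : ℕ}

lemma exists_max_rank (hα : graphRank G = (α : ℕ∞)) (h1 : 1 ≤ α) :
    ∃ r, cornerRank G r = (α : ℕ∞) := by
  have hV : Nonempty V := by
    by_contra h
    rw [not_nonempty_iff] at h
    rw [graphRank, iSup_of_empty] at hα
    have h0 : ((0:ℕ) : ℕ∞) = (α : ℕ∞) := by simpa using hα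
    have : (0:ℕ) = α := by exact_mod_cast h0
    omega
  obtain ⟨r, hr⟩ := Finite.exists_max (cornerRank G)
  refine ⟨r, le_antisymm ?_ ?_⟩
  · rw [← hα]; exact le_iSup _ r
  · rw [← hα]; exact iSup_le hr

lemma rank_le_graphRank (hα : graphRank G = (α : ℕ∞)) (v : V) :
    cornerRank G v ≤ (α : ℕ∞) := by
  rw [← hα]; exact le_iSup _ v

lemma stage_not_clique (hα : graphRank G = (α : ℕ∞)) {n : ℕ} (h1 : 1 ≤ n) (hn : n < α) :
    ¬ G.IsClique (stage G n) := by
  obtain ⟨r, hr⟩ := exists_max_rank hα (by omega)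
  intro hcl
  have hmem : r ∈ stage G n := mem_stage_of_rank hr h1 (by omega)
  have hle : cornerRank G r ≤ (n : ℕ∞) := sInf_le ⟨n, rfl, h1, Or.inr ⟨hcl, hmem⟩⟩
  rw [hr] at hle
  exact absurd (by exact_mod_cast hle : α ≤ n) (by omega)

lemma corners_eq (hα : graphRank G = (α : ℕ∞)) {n : ℕ} (h1 : 1 ≤ n) (hn : n < α) :
    {v | cornerRank G v = ((n : ℕ) : ℕ∞)} = {v | StrictCorner G (stage G n) v} := by
  ext c
  simp only [Set.mem_setOf_eq]
  constructor
  · intro h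
    obtain ⟨-, hQ, -⟩ := cornerRank_eq_iff.mp h
    rcases hQ with h' | ⟨hcl, -⟩
    · exact h'
    · exact absurd hcl (stage_not_clique hα h1 hn)
  · intro hc
    rw [cornerRank_eq_iff]
    refine ⟨h1, Or.inl hc, ?_⟩
    intro m hm1 hmn hQm
    rcases hQm with h' | ⟨hcl, -⟩
    · have : c ∉ stage G (m+1) := by
        rw [stage_succ hm1]
        exact fun hmem => hmem.2 h'
      exact this (stage_anti (by omega) hc.1)
    · exact (stage_not_clique hα hm1 (by omega)) hcl

lemma corners_nonempty (hα : graphRank G = (α : ℕ∞)) {n : ℕ} (h1 : 1 ≤ n) (hn : n < α) :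
    ∃ c, StrictCorner G (stage G n) c := by
  by_contra h
  push_neg at h
  have hstab : ∀ j, stage G (n + j) = stage G n := by
    intro j
    induction j with
    | zero => rfl
    | succ k ih =>
      have : stage G (n + k + 1) = stage G (n + k) \ {v | StrictCorner G (stage G (n+k)) v} :=
        stage_succ (by omega)
      rw [ih] at this
      rw [show n + (k+1) = n + k + 1 by omega, this]
      have : {v | StrictCorner G (stage G n) v} = ∅ := by
        ext c; simp only [Set.mem_setOf_eq, Set.mem_empty_iff_false, iff_false]; exact h c
      rw [this, Set.diff_empty]
  obtain ⟨r, hr⟩ := exists_max_rank hα (by omega)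
  obtain ⟨-, hQ, -⟩ := cornerRank_eq_iff.mp hr
  have hsα : stage G α = stage G n := by
    have := hstab (α - n); rwa [show n + (α - n) = α by omega] at this
  rcases hQ with h' | ⟨hcl, -⟩
  · rw [hsα] at h'; exact h r h'
  · rw [hsα] at hcl; exact stage_not_clique hα h1 hn hcl

lemma stage_top_clique (hα : graphRank G = (α : ℕ∞)) (h1 : 1 ≤ α) :
    G.IsClique (stage G α) := by
  by_contra hncl
  -- every vertex of stage α is a strict corner of stage α
  have hall : ∀ u ∈ stage G α, StrictCorner G (stage G α) u := by
    intro u hu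
    have hle : cornerRank G u ≤ (α : ℕ∞) := rank_le_graphRank hα u
    have hne : cornerRank G u ≠ ⊤ := fun h => by simp [h] at hle
    lift cornerRank G u to ℕ using hne with m hm
    have hm' : cornerRank G u = (m : ℕ∞) := hm.symm
    have hmle : m ≤ α := by exact_mod_cast hle
    obtain ⟨hm1, hQ, -⟩ := cornerRank_eq_iff.mp hm'
    rcases Nat.eq_or_lt_of_le hmle with rfl | hlt
    · rcases hQ with h' | ⟨hcl, -⟩
      · exact h'
      · exact absurd hcl hncl
    · rcases hQ with h' | ⟨hcl, -⟩
      · exfalso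
        have : u ∉ stage G (m+1) := by
          rw [stage_succ hm1]; exact fun hmem => hmem.2 h'
        exact this (stage_anti (by omega) hu)
      · exact absurd hcl (stage_not_clique hα hm1 hlt)
  obtain ⟨r, hr⟩ := exists_max_rank hα h1
  have hrmem : r ∈ stage G α := mem_stage_of_rank hr h1 le_rfl
  have hne : Nonempty {u // u ∈ stage G α} := ⟨⟨r, hrmem⟩⟩
  obtain ⟨⟨u, hu⟩, hmax⟩ :=
    Finite.exists_max (fun u : {u // u ∈ stage G α} => (closedNbhd G (stage G α) u).ncard)
  obtain ⟨-, w, hw, -, hss⟩ := hall u hu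
  have hlt : (closedNbhd G (stage G α) u).ncard < (closedNbhd G (stage G α) w).ncard :=
    Set.ncard_lt_ncard hss (Set.toFinite _)
  exact (not_le.mpr hlt) (hmax ⟨w, hw⟩)

lemma claim1 (hα : graphRank G = (α : ℕ∞)) (h2 : 2 ≤ α)
    (hone : {v | cornerRank G v = ((α - 1 : ℕ) : ℕ∞)}.ncard = 1) : False := by
  set n := α - 1 with hn
  have hcor : {v | cornerRank G v = ((n : ℕ) : ℕ∞)} = {v | StrictCorner G (stage G n) v} :=
    corners_eq hα (by omega) (by omega)
  rw [hcor] at hone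
  obtain ⟨v, hv⟩ := Set.ncard_eq_one.mp hone
  have hvc : StrictCorner G (stage G n) v := by
    have : v ∈ ({v} : Set V) := rfl
    rw [← hv] at this; exact this
  set S := stage G n with hS
  obtain ⟨hvS, w, hwS, hwv, hss⟩ := hvc
  have hstage : stage G (n+1) = S \ {v} := by
    rw [stage_succ (by omega : 1 ≤ n), hv]
  have hα1 : n + 1 = α := by omega
  have hcl : G.IsClique (stage G α) := stage_top_clique hα (by omega)
  rw [← hα1, hstage] at hcl
  -- facts
  have hvNv : v ∈ closedNbhd G S v := ⟨hvS, Or.inl rfl⟩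
  have hvNw : v ∈ closedNbhd G S w := hss.1 hvNv
  have hadjvw : G.Adj v w := by
    rcases hvNw.2 with h | h
    · exact absurd h.symm hwv
    · exact h
  obtain ⟨z, hzw, hznv⟩ := Set.exists_of_ssubset hss
  have hzS : z ∈ S := hzw.1
  have hzv : ¬ (z = v ∨ G.Adj z v) := fun h => hznv ⟨hzS, h⟩
  have hwz : w ≠ z := by
    rintro rfl
    exact hzv (Or.inr hadjvw.symm)
  have hwmem : w ∈ S \ ({v} : Set V) := ⟨hwS, fun h => hwv h⟩
  have hzcorner : StrictCorner G S z := by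
    refine ⟨hzS, w, hwS, hwz, ?_, ?_⟩
    · intro u hu
      have huv : u ≠ v := by
        rintro rfl
        rcases hu.2 with h | h
        · exact hzv (Or.inl h.symm)
        · exact hzv (Or.inr h.symm)
      have humem : u ∈ S \ ({v} : Set V) := ⟨hu.1, huv⟩
      refine ⟨hu.1, ?_⟩
      by_cases huw : u = w
      · exact Or.inl huw
      · exact Or.inr (hcl humem hwmem huw)
    · intro heq
      have : v ∈ closedNbhd G S z := heq hvNw
      rcases this.2 with h | h
      · exact hzv (Or.inl h.symm)
      · exact hzv (Or.inr h.symm)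
  have : z ∈ ({v} : Set V) := by rw [← hv]; exact hzcorner
  exact hzv (Or.inl this)

lemma claim2 (hα : graphRank G = (α : ℕ∞)) (h3 : 3 ≤ α)
    (hone : {v | cornerRank G v = ((α - 2 : ℕ) : ℕ∞)}.ncard = 1) : False := by
  set n := α - 2 with hn
  have hcor : {v | cornerRank G v = ((n : ℕ) : ℕ∞)} = {v | StrictCorner G (stage G n) v} :=
    corners_eq hα (by omega) (by omega)
  rw [hcor] at hone
  obtain ⟨v, hv⟩ := Set.ncard_eq_one.mp hone
  set S := stage G n with hS
  set T := stage G (n+1) with hT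
  have hTeq : T = S \ {v} := by rw [hT, stage_succ (by omega : 1 ≤ n), hv]
  have hstage2 : stage G (n+2) = T \ {c | StrictCorner G T c} := by
    rw [show n + 2 = (n+1) + 1 by omega]
    exact stage_succ (by omega)
  have hα2 : n + 2 = α := by omega
  have hcl : G.IsClique (T \ {c | StrictCorner G T c}) := by
    have := stage_top_clique hα (by omega)
    rwa [← hα2, hstage2] at this
  have hvT : v ∉ T := by rw [hTeq]; exact fun h => h.2 rfl
  have hTS : T ⊆ S := by rw [hTeq]; exact Set.diff_subset
  -- closedNbhd lift
  have hNTS : ∀ c : V, closedNbhd G T c ⊆ closedNbhd G S c := by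
    intro c u hu; exact ⟨hTS hu.1, hu.2⟩
  have hNST : ∀ c u, u ∈ closedNbhd G S c → u ≠ v → u ∈ closedNbhd G T c := by
    intro c u hu huv
    exact ⟨by rw [hTeq]; exact ⟨hu.1, huv⟩, hu.2⟩
  -- (a)
  have ha : ∀ c w : V, c ∈ T → w ∈ T → w ≠ c → closedNbhd G T c ⊂ closedNbhd G T w →
      G.Adj v c ∧ v ∉ closedNbhd G S w := by
    intro c w hcT hwT hwc hss
    have key : v ∈ closedNbhd G S c ∧ v ∉ closedNbhd G S w := by
      by_contra hcon
      have hdis : v ∉ closedNbhd G S c ∨ v ∈ closedNbhd G S w := by tauto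
      have hcorner : StrictCorner G S c := by
        refine ⟨hTS hcT, w, hTS hwT, hwc, ?_, ?_⟩
        · intro u hu
          by_cases huv : u = v
          · subst huv
            rcases hdis with h | h
            · exact absurd hu h
            · exact h
          · exact hNTS w (hss.1 (hNST c u hu huv))
        · intro heq
          obtain ⟨z, hzw, hznc⟩ := Set.exists_of_ssubset hss
          have hzv : z ≠ v := by rintro rfl; exact hvT hzw.1
          exact hznc (hNST c z (heq (hNTS w hzw)) hzv)
      have : c ∈ ({v} : Set V) := by rw [← hv]; exact hcorner
      rw [hTeq] at hcT
      exact hcT.2 this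
    refine ⟨?_, key.2⟩
    rcases key.1.2 with h | h
    · exfalso; rw [hTeq] at hcT; exact hcT.2 h.symm
    · exact h
  -- corners of T are adjacent to v
  have hCadj : ∀ c : V, StrictCorner G T c → G.Adj v c := by
    rintro c ⟨hcT, w, hwT, hwc, hss⟩
    exact (ha c w hcT hwT hwc hss).1
  -- v is a strict corner of S
  have hvc : StrictCorner G S v := by
    have : v ∈ ({v} : Set V) := rfl
    rw [← hv] at this; exact this
  obtain ⟨hvS, w', hw'S, hw'v, hssv⟩ := hvc
  have hvNv : v ∈ closedNbhd G S v := ⟨hvS, Or.inl rfl⟩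
  have hvNw' : v ∈ closedNbhd G S w' := hssv.1 hvNv
  have hadjvw' : G.Adj v w' := by
    rcases hvNw'.2 with h | h
    · exact absurd h.symm hw'v
    · exact h
  have hw'T : w' ∈ T := by rw [hTeq]; exact ⟨hw'S, hw'v⟩
  -- corners of T are in N_S[v] ⊆ N_S[w']
  have hCsub : ∀ c : V, StrictCorner G T c → c ∈ closedNbhd G S w' := by
    intro c hc
    exact hssv.1 ⟨hTS hc.1, Or.inr (hCadj c hc).symm⟩
  by_cases hC : StrictCorner G T w'
  · -- Case 2
    obtain ⟨-, w₂, hw₂T, hw₂w', hss2⟩ := hC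
    have hvw₂ : v ∉ closedNbhd G S w₂ := (ha w' w₂ hw'T hw₂T hw₂w' hss2).2
    have hw₂nc : ¬ StrictCorner G T w₂ := by
      intro h
      exact hvw₂ ⟨hvS, Or.inr (hCadj w₂ h)⟩
    have hw₂K : w₂ ∈ T \ {c | StrictCorner G T c} := ⟨hw₂T, hw₂nc⟩
    -- w₂ dominates T
    have hdom : ∀ t ∈ T, t ∈ closedNbhd G T w₂ := by
      intro t htT
      by_cases htc : StrictCorner G T t
      · have : t ∈ closedNbhd G S w' := hCsub t htc
        have htv : t ≠ v := by rintro rfl; exact hvT htT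
        exact hss2.1 (hNST w' t this htv)
      · have htK : t ∈ T \ {c | StrictCorner G T c} := ⟨htT, htc⟩
        by_cases htw : t = w₂
        · exact ⟨htT, Or.inl htw⟩
        · exact ⟨htT, Or.inr (hcl htK hw₂K htw)⟩
    obtain ⟨z, hzw₂, hznw'⟩ := Set.exists_of_ssubset hss2
    have hzT : z ∈ T := hzw₂.1
    have hzw' : ¬ (z = w' ∨ G.Adj z w') := fun h => hznw' ⟨hzT, h⟩
    have hzv : z ≠ v := by rintro rfl; exact hvT hzT
    have hadjvz : ¬ G.Adj v z := by
      intro h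
      have : z ∈ closedNbhd G S w' := hssv.1 ⟨hTS hzT, Or.inr h.symm⟩
      rcases this.2 with h' | h'
      · exact hzw' (Or.inl h')
      · exact hzw' (Or.inr h')
    have hw₂z : w₂ ≠ z := by
      rintro rfl
      have : w' ∈ closedNbhd G T w₂ := hss2.1 ⟨hw'T, Or.inl rfl⟩
      rcases this.2 with h' | h'
      · exact hzw' (Or.inl h'.symm)
      · exact hzw' (Or.inr h'.symm)
    have hzcorner : StrictCorner G S z := by
      refine ⟨hTS hzT, w₂, hTS hw₂T, hw₂z, ?_, ?_⟩
      · intro u hu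
        have huv : u ≠ v := by
          rintro rfl
          rcases hu.2 with h | h
          · exact hzv h.symm
          · exact hadjvz h
        have huT : u ∈ T := by rw [hTeq]; exact ⟨hu.1, huv⟩
        exact hNTS w₂ (hdom u huT)
      · intro heq
        have : w' ∈ closedNbhd G S z := heq (hNTS w₂ (hss2.1 ⟨hw'T, Or.inl rfl⟩))
        rcases this.2 with h' | h'
        · exact hzw' (Or.inl h'.symm)
        · exact hzw' (Or.inr h'.symm)
    have : z ∈ ({v} : Set V) := by rw [← hv]; exact hzcorner
    exact hzv this
  · -- Case 1
    have hw'K : w' ∈ T \ {c | StrictCorner G T c} := ⟨hw'T, hC⟩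
    have hdomS : ∀ s ∈ S, s ∈ closedNbhd G S w' := by
      intro s hsS
      by_cases hsv : s = v
      · subst hsv; exact hvNw'
      · have hsT : s ∈ T := by rw [hTeq]; exact ⟨hsS, hsv⟩
        by_cases hsc : StrictCorner G T s
        · exact hCsub s hsc
        · have hsK : s ∈ T \ {c | StrictCorner G T c} := ⟨hsT, hsc⟩
          by_cases hsw : s = w'
          · exact ⟨hsS, Or.inl hsw⟩
          · exact ⟨hsS, Or.inr (hcl hsK hw'K hsw)⟩
    obtain ⟨c₀, hc₀⟩ := corners_nonempty hα (by omega : 1 ≤ n+1) (by omega : n+1 < α)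
    rw [← hT] at hc₀
    obtain ⟨hc₀T, w₀, hw₀T, hw₀c₀, hss0⟩ := hc₀
    have hvw₀ : v ∉ closedNbhd G S w₀ := (ha c₀ w₀ hc₀T hw₀T hw₀c₀ hss0).2
    have hw'w₀ : w' ≠ w₀ := by
      rintro rfl; exact hvw₀ hvNw'
    have hw₀corner : StrictCorner G S w₀ := by
      refine ⟨hTS hw₀T, w', hw'S, hw'w₀, ?_, ?_⟩
      · intro u hu
        exact hdomS u hu.1
      · intro heq
        exact hvw₀ (heq hvNw')
    have : w₀ ∈ ({v} : Set V) := by rw [← hv]; exact hw₀corner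
    rw [Set.mem_singleton_iff] at this
    subst this
    exact hvw₀ ⟨hvS, Or.inl rfl⟩

end GraphLevel
end CopsRobbers

/-- no vector with `x_{α-1} = 1` (second entry of the list `1`) is realizable,
and no vector with `x_{α-2} = 1` (third entry of the list `1`) is realizable. -/
theorem CopsRobbers.not_realizable_of_second_or_third_entry_one (x : List ℕ) :
    (∀ h : 2 ≤ x.length, x.get ⟨1, h⟩ = 1 → ¬ CopsRobbers.Realizable x) ∧
    (∀ h : 3 ≤ x.length, x.get ⟨2, h⟩ = 1 → ¬ CopsRobbers.Realizable x) := by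
  constructor
  · rintro h hone ⟨W, instW, G, -, hrank, hcard⟩
    have : Finite W := Finite.of_fintype W
    have h1 := hcard ⟨1, h⟩
    simp only [hone] at h1
    exact CopsRobbers.claim1 hrank h h1.symm
  · rintro h hone ⟨W, instW, G, -, hrank, hcard⟩
    have : Finite W := Finite.of_fintype W
    have h1 := hcard ⟨2, h⟩
    simp only [hone] at h1
    exact CopsRobbers.claim2 hrank h h1.symm
end
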